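/- In ℝ² with the Euclidean norm, let R_θ denote rotation about the origin by angle θ, acting as R_θ(u) = (cos θ·u₁ − sin θ·u₂, sin θ·u₁ + cos θ·u₂). Define p₁ := ( (√5 − √(4−√5))/4 , (√(5+2√5) − √(2+3/√5))/4 ), p₁' := (0, √((5+√5)/10)), q₁' := ( (1+√5)/8 , √(10 + 22/√5)/8 ), and for k ≥ 1 set p_k := R_{2π(k−1)/5}(p₁) and p_k' := R_{2π(k−1)/5}(p₁'). For vectors u, w ∈ ℝ² let [u w] be the 2×2 matrix with columns u and w, and define M₁ := [p₄'−p₃', p₁'−p₃'] · [p₁−p₂, p₁'−p₂]⁻¹ and M₂ := [p₅'−p₄', p₁'−p₄'] · [q₁'−p₁, p₁'−p₁]⁻¹. Then det M₁ = det M₂. -/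

import Mathlib

noncomputable section

open Real

/-- The rotation matrix about the origin by angle `θ`. -/
def rotMat (θ : ℝ) : Matrix (Fin 2) (Fin 2) ℝ :=
  !![cos θ, -sin θ; sin θ, cos θ]

/-- `colMat u v` is the 2×2 real matrix whose first column is `u` and
whose second column is `v`. -/
def colMat (u v : EuclideanSpace ℝ (Fin 2)) : Matrix (Fin 2) (Fin 2) ℝ :=
  Matrix.of fun i j => ![u, v] j i

/-- The point `p₁` of the partition of the regular unit pentagon. -/
def pPt (k : ℕ) : EuclideanSpace ℝ (Fin 2) :=
  Matrix.toEuclideanLin (rotMat (2 * π * ((k - 1 : ℕ) : ℝ) / 5))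
    !₂[(sqrt 5 - sqrt (4 - sqrt 5)) / 4,
      (sqrt (5 + 2 * sqrt 5) - sqrt (2 + 3 / sqrt 5)) / 4]

/-- The points `p₁', p₂', …` of the partition of the regular unit pentagon. -/
def pPt' (k : ℕ) : EuclideanSpace ℝ (Fin 2) :=
  Matrix.toEuclideanLin (rotMat (2 * π * ((k - 1 : ℕ) : ℝ) / 5))
    !₂[0, sqrt ((5 + sqrt 5) / 10)]

/-- The point `q₁'` of the partition of the regular unit pentagon. -/
def qPt' : EuclideanSpace ℝ (Fin 2) :=
  !₂[(1 + sqrt 5) / 8, sqrt (10 + 22 / sqrt 5) / 8]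

/-- The matrix mapping the small blue pentagon onto the large blue pentagon. -/
def M0 : Matrix (Fin 2) (Fin 2) ℝ :=
  (‖pPt' 1‖ / ‖pPt 1‖) • rotMat (π / 5)

/-- The matrix mapping the small orange triangle onto the large orange triangle. -/
def M1 : Matrix (Fin 2) (Fin 2) ℝ :=
  colMat (pPt' 4 - pPt' 3) (pPt' 1 - pPt' 3) * (colMat (pPt 1 - pPt 2) (pPt' 1 - pPt 2))⁻¹

/-- The matrix mapping the small yellow triangle onto the large yellow triangle. -/
def M2 : Matrix (Fin 2) (Fin 2) ℝ :=
  colMat (pPt' 5 - pPt' 4) (pPt' 1 - pPt' 4) * (colMat (qPt' - pPt 1) (pPt' 1 - pPt 1))⁻¹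
/-!
Every point involved lies on a ray from the centre at angle `π/2 + kπ/5`: the vertices `pₖ'`
on the circle of radius `R = 1 / (2 sin (π/5))`, the edge midpoint `q₁'` at distance
`R cos (π/5)`, and the points `pₖ` at a distance `ρ`. In polar coordinates the shoelace formula
expresses all four triangle determinants through `sin (π/5)` and `sin (2π/5) = φ sin (π/5)`.
The large orange triangle has `φ` times the area of the large yellow one since
`φ + 2 = φ (2φ - 1)`, and the small orange triangle has `φ` times the area of the small yellow
one because `ρ / R` is a root of `φ X² - (2 + φ) X + φ cos (π/5)`. Hence the two ratios
`det M₁` and `det M₂` agree.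
-/

open goldenRatio

lemma det_mul_inv_eq_of_det_eq_mul {n K : Type*} [Fintype n] [DecidableEq n] [Field K]
    {A B C D : Matrix n n K} {k : K} (hk : k ≠ 0) (hA : A.det = k * C.det)
    (hB : B.det = k * D.det) : (A * B⁻¹).det = (C * D⁻¹).det := by
  rw [Matrix.det_mul, Matrix.det_mul, Matrix.det_nonsing_inv, Matrix.det_nonsing_inv,
    Ring.inverse_eq_inv', hA, hB, mul_inv, mul_mul_mul_comm, mul_inv_cancel₀ hk, one_mul]

def polar (ρ θ : ℝ) : EuclideanSpace ℝ (Fin 2) := !₂[ρ * cos θ, ρ * sin θ]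

lemma toEuclideanLin_rotMat_polar (θ ρ α : ℝ) :
    Matrix.toEuclideanLin (rotMat θ) (polar ρ α) = polar ρ (α + θ) := by
  ext i
  fin_cases i <;> simp [polar, rotMat, cos_add, sin_add] <;> ring

lemma det_colMat (u v : EuclideanSpace ℝ (Fin 2)) :
    (colMat u v).det = u 0 * v 1 - v 0 * u 1 := by
  simp [colMat, Matrix.det_fin_two]

lemma det_colMat_sub_polar (ρ₁ ρ₂ ρ₃ θ₁ θ₂ θ₃ : ℝ) :
    (colMat (polar ρ₂ θ₂ - polar ρ₁ θ₁) (polar ρ₃ θ₃ - polar ρ₁ θ₁)).det =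
      ρ₁ * ρ₂ * sin (θ₂ - θ₁) + ρ₂ * ρ₃ * sin (θ₃ - θ₂) + ρ₃ * ρ₁ * sin (θ₁ - θ₃) := by
  simp [det_colMat, polar, sin_sub]
  ring

lemma sqrt_five_sq : √5 ^ 2 = 5 := sq_sqrt (by norm_num)

lemma sqrt_five_lt_four : √5 < 4 := by
  rw [sqrt_lt' (by norm_num)]
  norm_num

lemma sin_pi_div_five_pos : 0 < sin (π / 5) :=
  sin_pos_of_pos_of_lt_pi (by positivity) (by linarith [pi_pos])

lemma sin_pi_div_five_sq : sin (π / 5) ^ 2 = (5 - √5) / 8 := by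
  rw [sin_sq, cos_pi_div_five]
  linear_combination (-1 / 16 : ℝ) * sqrt_five_sq

lemma sin_two_pi_div_five : sin (2 * π / 5) = φ * sin (π / 5) := by
  rw [mul_div_assoc, sin_two_mul, cos_pi_div_five, goldenRatio]
  ring

lemma two_mul_sin_pi_div_five_mul_sqrt_five_add :
    2 * sin (π / 5) * √(5 + 2 * √5) = φ * √5 := by
  rw [← sq_eq_sq₀ (by positivity [sin_pi_div_five_pos]) (by positivity), mul_pow, mul_pow,
    mul_pow, sin_pi_div_five_sq, sq_sqrt (by positivity), goldenRatio]
  field_simp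
  linear_combination (-8 * √5 ^ 2 - 16 * √5 - 80) * sqrt_five_sq

lemma two_mul_sin_pi_div_five_mul_sqrt_two_add :
    2 * sin (π / 5) * √(2 + 3 / √5) = φ * √(4 - √5) := by
  rw [← sq_eq_sq₀ (by positivity [sin_pi_div_five_pos]) (by positivity), mul_pow, mul_pow,
    mul_pow, sin_pi_div_five_sq, sq_sqrt (by positivity),
    sq_sqrt (by linarith [sqrt_five_lt_four]), goldenRatio]
  field_simp
  linear_combination (8 * √5 ^ 2 - 16 * √5 - 48) * sqrt_five_sq

lemma sin_pi_div_five_mul_sqrt_ten_add : sin (π / 5) * √(10 + 22 / √5) = φ ^ 2 := by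
  rw [← sq_eq_sq₀ (by positivity [sin_pi_div_five_pos]) (by positivity), mul_pow,
    sin_pi_div_five_sq, sq_sqrt (by positivity), goldenRatio]
  field_simp
  linear_combination (-8 * √5 ^ 3 - 32 * √5 ^ 2 - 88 * √5 - 352) * sqrt_five_sq

def outerRadius : ℝ := √((5 + √5) / 10)

def innerRadius : ℝ := (√5 - √(4 - √5)) / (4 * sin (π / 5))

lemma outerRadius_eq : outerRadius = 1 / (2 * sin (π / 5)) := by
  have hs := sin_pi_div_five_pos
  rw [eq_div_iff (by positivity), outerRadius, ← sq_eq_sq₀ (by positivity) zero_le_one,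
    mul_pow, mul_pow, sin_pi_div_five_sq, sq_sqrt (by positivity)]
  linear_combination (-1 / 20 : ℝ) * sqrt_five_sq

lemma innerRadius_quadratic :
    φ * innerRadius ^ 2 - (2 + φ) * outerRadius * innerRadius
      + φ * cos (π / 5) * outerRadius ^ 2 = 0 := by
  have hs := sin_pi_div_five_pos
  have h4 : √(4 - √5) ^ 2 = 4 - √5 := sq_sqrt (by linarith [sqrt_five_lt_four])
  rw [innerRadius, outerRadius_eq, cos_pi_div_five, goldenRatio]
  field_simp
  linear_combination (4 * √5 + 4) * h4 + (4 * √5 - 4 - 8 * √(4 - √5)) * sqrt_five_sq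

lemma pPt'_eq_polar (k : ℕ) :
    pPt' k = polar outerRadius (π / 2 + 2 * π * ((k - 1 : ℕ) : ℝ) / 5) := by
  rw [pPt', ← toEuclideanLin_rotMat_polar]
  congr 1
  rw [polar, cos_pi_div_two, sin_pi_div_two, outerRadius, mul_zero, mul_one]

lemma pPt_eq_polar (k : ℕ) :
    pPt k = polar innerRadius (π / 2 - π / 5 + 2 * π * ((k - 1 : ℕ) : ℝ) / 5) := by
  have hs := sin_pi_div_five_pos
  rw [pPt, ← toEuclideanLin_rotMat_polar]
  congr 1
  rw [polar, innerRadius, cos_pi_div_two_sub, sin_pi_div_two_sub]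
  congr 3
  · field_simp
  · have h1 := two_mul_sin_pi_div_five_mul_sqrt_five_add
    have h2 := two_mul_sin_pi_div_five_mul_sqrt_two_add
    rw [goldenRatio] at h1 h2
    rw [cos_pi_div_five, div_mul_eq_mul_div, eq_div_iff (by positivity)]
    linear_combination h1 / 2 - h2 / 2

lemma qPt'_eq_polar : qPt' = polar (cos (π / 5) * outerRadius) (π / 2 - π / 5) := by
  have hs := sin_pi_div_five_pos
  rw [qPt', polar, outerRadius_eq, cos_pi_div_two_sub, sin_pi_div_two_sub, cos_pi_div_five]
  congr 3
  · field_simp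
    ring
  · have h := sin_pi_div_five_mul_sqrt_ten_add
    rw [goldenRatio] at h
    generalize √(10 + 22 / √5) = t at h ⊢
    field_simp
    linear_combination 32 * h

lemma det_large_orange :
    (colMat (pPt' 4 - pPt' 3) (pPt' 1 - pPt' 3)).det =
      outerRadius ^ 2 * (sin (2 * π / 5) + 2 * sin (π / 5)) := by
  rw [pPt'_eq_polar, pPt'_eq_polar, pPt'_eq_polar, det_colMat_sub_polar]
  push_cast
  rw [show π / 2 + 2 * π * 3 / 5 - (π / 2 + 2 * π * 2 / 5) = 2 * π / 5 by ring,
    show π / 2 + 2 * π * 0 / 5 - (π / 2 + 2 * π * 3 / 5) = π - π / 5 - 2 * π by ring,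
    show π / 2 + 2 * π * 2 / 5 - (π / 2 + 2 * π * 0 / 5) = π - π / 5 by ring,
    sin_sub_two_pi, sin_pi_sub]
  ring

lemma det_large_yellow :
    (colMat (pPt' 5 - pPt' 4) (pPt' 1 - pPt' 4)).det =
      outerRadius ^ 2 * (2 * sin (2 * π / 5) - sin (π / 5)) := by
  rw [pPt'_eq_polar, pPt'_eq_polar, pPt'_eq_polar, det_colMat_sub_polar]
  push_cast
  rw [show π / 2 + 2 * π * 4 / 5 - (π / 2 + 2 * π * 3 / 5) = 2 * π / 5 by ring,
    show π / 2 + 2 * π * 0 / 5 - (π / 2 + 2 * π * 4 / 5) = 2 * π / 5 - 2 * π by ring,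
    show π / 2 + 2 * π * 3 / 5 - (π / 2 + 2 * π * 0 / 5) = π / 5 + π by ring,
    sin_sub_two_pi, sin_add_pi]
  ring

lemma det_small_orange :
    (colMat (pPt 1 - pPt 2) (pPt' 1 - pPt 2)).det =
      2 * innerRadius * outerRadius * sin (π / 5) - innerRadius ^ 2 * sin (2 * π / 5) := by
  rw [pPt_eq_polar, pPt_eq_polar, pPt'_eq_polar, det_colMat_sub_polar]
  push_cast
  rw [show π / 2 - π / 5 + 2 * π * 0 / 5 - (π / 2 - π / 5 + 2 * π * 1 / 5) = -(2 * π / 5) by ring,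
    show π / 2 + 2 * π * 0 / 5 - (π / 2 - π / 5 + 2 * π * 0 / 5) = π / 5 by ring,
    show π / 2 - π / 5 + 2 * π * 1 / 5 - (π / 2 + 2 * π * 0 / 5) = π / 5 by ring, sin_neg]
  ring

lemma det_small_yellow :
    (colMat (qPt' - pPt 1) (pPt' 1 - pPt 1)).det =
      (cos (π / 5) * outerRadius - innerRadius) * outerRadius * sin (π / 5) := by
  rw [qPt'_eq_polar, pPt_eq_polar, pPt'_eq_polar, det_colMat_sub_polar]
  push_cast
  rw [show π / 2 - π / 5 - (π / 2 - π / 5 + 2 * π * 0 / 5) = 0 by ring,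
    show π / 2 + 2 * π * 0 / 5 - (π / 2 - π / 5) = π / 5 by ring,
    show π / 2 - π / 5 + 2 * π * 0 / 5 - (π / 2 + 2 * π * 0 / 5) = -(π / 5) by ring,
    sin_zero, sin_neg]
  ring

lemma det_large_orange_eq_goldenRatio_mul :
    (colMat (pPt' 4 - pPt' 3) (pPt' 1 - pPt' 3)).det =
      φ * (colMat (pPt' 5 - pPt' 4) (pPt' 1 - pPt' 4)).det := by
  rw [det_large_orange, det_large_yellow, sin_two_pi_div_five]
  linear_combination (-2 * outerRadius ^ 2 * sin (π / 5)) * goldenRatio_sq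

lemma det_small_orange_eq_goldenRatio_mul :
    (colMat (pPt 1 - pPt 2) (pPt' 1 - pPt 2)).det =
      φ * (colMat (qPt' - pPt 1) (pPt' 1 - pPt 1)).det := by
  rw [det_small_orange, det_small_yellow, sin_two_pi_div_five]
  linear_combination (-sin (π / 5)) * innerRadius_quadratic

/-- The linear parts `M₁` and `M₂` of the affine substitution map on the orange and
yellow triangles have equal determinant (equal area-scaling factors), which makes the
substitution map induce an invariant measure. -/
theorem substitution_matrices_det_eq : M1.det = M2.det :=
  det_mul_inv_eq_of_det_eq_mul goldenRatio_ne_zero det_large_orange_eq_goldenRatio_mul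
    det_small_orange_eq_goldenRatio_mul

end
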